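/- Let Q^p, Q^s be independent Poisson with means C^{γ^p} and C^{γ^s} where 0 < γ^s < γ^p < 1. Then lim_{C→∞} -(log P(Q^p+Q^s > C, Q^s>0))/(C log C) = 1 - γ^p; in particular the secondary diversity gain is independent of γ^s. -/

import Mathlib

open Filter Real

noncomputable def poisP (l : ℝ) (k : ℕ) : ℝ := Real.exp (-l) * l ^ k / (Nat.factorial k)

noncomputable def secOutage (lp ls : ℝ) (C : ℝ) : ℝ :=
  ∑' j : ℕ, ∑' k : ℕ, if C < (j : ℝ) + (k : ℝ) ∧ 0 < k then poisP lp j * poisP ls k else 0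

/-!
Write `λ_p = C^{γ^p}`, `λ_s = C^{γ^s}`. The Chernoff bound with `r = (1 - γ^p) log C`, for which
`λ_p e^r = C` and `λ_s e^r ≤ C`, gives `-log P ≥ (1 - γ^p) C log C - 2C`. Conversely the single
outcome `Q^p = C, Q^s = 1` lies in the outage event, and the crude bound `C! ≤ C^C` gives
`-log P ≤ (1 - γ^p) C log C + λ_p + λ_s`. Both error terms are `o(C log C)`.
-/

lemma poisP_nonneg {l : ℝ} (hl : 0 ≤ l) (k : ℕ) : 0 ≤ poisP l k := by
  unfold poisP; positivity

lemma poisP_pos {l : ℝ} (hl : 0 < l) (k : ℕ) : 0 < poisP l k := by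
  unfold poisP; positivity

lemma log_poisP {l : ℝ} (hl : 0 < l) (k : ℕ) :
    log (poisP l k) = -l + k * log l - log k.factorial := by
  have hfact : (k.factorial : ℝ) ≠ 0 := by positivity
  rw [poisP, log_div (by positivity) hfact, log_mul (exp_pos _).ne' (by positivity), log_exp,
    log_pow]

lemma hasSum_poisP_mul_exp (l r : ℝ) :
    HasSum (fun k : ℕ => poisP l k * exp (r * k)) (exp (l * (exp r - 1))) := by
  have hterm : ∀ k : ℕ, poisP l k * exp (r * k) = exp (-l) * ((l * exp r) ^ k / k.factorial) := by
    intro k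
    rw [poisP, mul_comm r, exp_nat_mul, mul_pow]
    ring
  have hsum := ((NormedSpace.expSeries_div_hasSum_exp (l * exp r)).mul_left (exp (-l)))
  rw [← exp_eq_exp_ℝ, ← exp_add] at hsum
  simpa only [hterm, show -l + l * exp r = l * (exp r - 1) by ring] using hsum

lemma hasSum_poisP (l : ℝ) : HasSum (poisP l) 1 := by
  simpa using hasSum_poisP_mul_exp l 0

section Outage

variable {lp ls : ℝ}

noncomputable def outageTerm (lp ls C : ℝ) (p : ℕ × ℕ) : ℝ :=
  if C < (p.1 : ℝ) + p.2 ∧ 0 < p.2 then poisP lp p.1 * poisP ls p.2 else 0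

lemma outageTerm_nonneg (hlp : 0 ≤ lp) (hls : 0 ≤ ls) (C : ℝ) (p : ℕ × ℕ) :
    0 ≤ outageTerm lp ls C p := by
  unfold outageTerm
  split_ifs
  · exact mul_nonneg (poisP_nonneg hlp _) (poisP_nonneg hls _)
  · exact le_rfl

lemma summable_outageTerm (hlp : 0 ≤ lp) (hls : 0 ≤ ls) (C : ℝ) :
    Summable (outageTerm lp ls C) := by
  refine ((hasSum_poisP lp).summable.mul_of_nonneg (hasSum_poisP ls).summable (poisP_nonneg hlp)
    (poisP_nonneg hls)).of_nonneg_of_le (outageTerm_nonneg hlp hls C) (fun p => ?_)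
  unfold outageTerm
  split_ifs
  · exact le_rfl
  · exact mul_nonneg (poisP_nonneg hlp _) (poisP_nonneg hls _)

lemma secOutage_eq_tsum_outageTerm (hlp : 0 ≤ lp) (hls : 0 ≤ ls) (C : ℝ) :
    secOutage lp ls C = ∑' p, outageTerm lp ls C p :=
  ((summable_outageTerm hlp hls C).tsum_prod).symm

/-- Chernoff bound: `P(Q^p + Q^s > C) ≤ E e^{r(Q^p + Q^s - C)}`. -/
lemma secOutage_le_exp (hlp : 0 ≤ lp) (hls : 0 ≤ ls) {r : ℝ} (hr : 0 ≤ r) (C : ℝ) :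
    secOutage lp ls C ≤ exp ((lp + ls) * (exp r - 1) - r * C) := by
  have hmgf := ((hasSum_poisP_mul_exp lp r).mul (hasSum_poisP_mul_exp ls r)
    (Summable.mul_of_nonneg (hasSum_poisP_mul_exp lp r).summable
      (hasSum_poisP_mul_exp ls r).summable
      (fun j => mul_nonneg (poisP_nonneg hlp j) (exp_pos _).le)
      (fun k => mul_nonneg (poisP_nonneg hls k) (exp_pos _).le))).mul_right (exp (-(r * C)))
  rw [← exp_add, ← exp_add, show lp * (exp r - 1) + ls * (exp r - 1) + -(r * C)
    = (lp + ls) * (exp r - 1) - r * C by ring] at hmgf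
  rw [secOutage_eq_tsum_outageTerm hlp hls]
  refine hasSum_le (fun p => ?_) (summable_outageTerm hlp hls C).hasSum hmgf
  unfold outageTerm
  split_ifs with hp
  · have htilt : 1 ≤ exp (r * p.1) * exp (r * p.2) * exp (-(r * C)) := by
      rw [← exp_add, ← exp_add]
      exact one_le_exp (by nlinarith [hp.1])
    have hprod := mul_nonneg (poisP_nonneg hlp p.1) (poisP_nonneg hls p.2)
    calc poisP lp p.1 * poisP ls p.2
        ≤ poisP lp p.1 * poisP ls p.2 * (exp (r * p.1) * exp (r * p.2) * exp (-(r * C))) :=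
          le_mul_of_one_le_right hprod htilt
      _ = _ := by ring
  · exact mul_nonneg (mul_nonneg (mul_nonneg (poisP_nonneg hlp _) (exp_pos _).le)
      (mul_nonneg (poisP_nonneg hls _) (exp_pos _).le)) (exp_pos _).le

lemma poisP_mul_poisP_one_le_secOutage (hlp : 0 ≤ lp) (hls : 0 ≤ ls) {C : ℝ} {m : ℕ}
    (hm : C < m + 1) : poisP lp m * poisP ls 1 ≤ secOutage lp ls C := by
  have hterm : outageTerm lp ls C (m, 1) = poisP lp m * poisP ls 1 :=
    if_pos ⟨by push_cast; exact hm, one_pos⟩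
  rw [secOutage_eq_tsum_outageTerm hlp hls, ← hterm]
  exact (summable_outageTerm hlp hls C).le_tsum _ fun p _ => outageTerm_nonneg hlp hls C p

lemma secOutage_pos (hlp : 0 < lp) (hls : 0 < ls) (m : ℕ) :
    0 < secOutage lp ls m :=
  (mul_pos (poisP_pos hlp m) (poisP_pos hls 1)).trans_le
    (poisP_mul_poisP_one_le_secOutage hlp.le hls.le (lt_add_one _))

end Outage

section Polynomial

variable {γp γs : ℝ} {n : ℕ}

lemma le_neg_log_secOutage_rpow (hγ : γs ≤ γp) (hγp : γp ≤ 1) (hn : 1 ≤ n) :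
    (1 - γp) * (n * log n) - 2 * n ≤ -log (secOutage ((n : ℝ) ^ γp) ((n : ℝ) ^ γs) n) := by
  have hx : (1 : ℝ) ≤ n := by exact_mod_cast hn
  have hx0 : (0 : ℝ) < n := by positivity
  set r := (1 - γp) * log n
  have hr : 0 ≤ r := mul_nonneg (by linarith) (log_nonneg hx)
  have her : exp r = (n : ℝ) ^ (1 - γp) := by rw [rpow_def_of_pos hx0, mul_comm]
  have hp : (n : ℝ) ^ γp * exp r = n := by
    rw [her, ← rpow_add hx0, add_sub_cancel, rpow_one]
  have hs : (n : ℝ) ^ γs * exp r ≤ n := by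
    rw [her, ← rpow_add hx0]
    exact rpow_le_self_of_one_le hx (by linarith)
  have hchernoff := (log_le_iff_le_exp (secOutage_pos (by positivity) (by positivity) n)).mpr
    (secOutage_le_exp (rpow_nonneg hx0.le γp) (rpow_nonneg hx0.le γs) hr n)
  nlinarith [rpow_nonneg hx0.le γp, rpow_nonneg hx0.le γs]

lemma neg_log_secOutage_rpow_le (hγs : 0 ≤ γs) (hn : 1 ≤ n) :
    -log (secOutage ((n : ℝ) ^ γp) ((n : ℝ) ^ γs) n)
      ≤ (1 - γp) * (n * log n) + ((n : ℝ) ^ γp + (n : ℝ) ^ γs) := by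
  have hx0 : (0 : ℝ) < n := by exact_mod_cast hn
  have hlp : 0 < (n : ℝ) ^ γp := by positivity
  have hls : 0 < (n : ℝ) ^ γs := by positivity
  have hsingle := log_le_log (mul_pos (poisP_pos hlp n) (poisP_pos hls 1))
    (poisP_mul_poisP_one_le_secOutage hlp.le hls.le (lt_add_one (n : ℝ)))
  have hfact : log n.factorial ≤ n * log n := by
    rw [← log_pow]
    exact log_le_log (by positivity) (by exact_mod_cast n.factorial_le_pow)
  rw [log_mul (poisP_pos hlp n).ne' (poisP_pos hls 1).ne', log_poisP hlp, log_poisP hls,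
    log_rpow hx0, log_rpow hx0] at hsingle
  simp only [Nat.cast_one, one_mul, Nat.factorial_one, log_one, sub_zero] at hsingle
  nlinarith [log_nonneg (Nat.one_le_cast.mpr hn)]

end Polynomial

lemma tendsto_rpow_div_mul_log {γ : ℝ} (hγ : γ < 1) :
    Tendsto (fun n : ℕ => (n : ℝ) ^ γ / (n * log n)) atTop (nhds 0) := by
  have hpow : Tendsto (fun n : ℕ => (n : ℝ) ^ (γ - 1)) atTop (nhds 0) := by
    simpa [Function.comp_def, neg_sub] using
      (tendsto_rpow_neg_atTop (y := 1 - γ) (by linarith)).comp tendsto_natCast_atTop_atTop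
  have hlog : Tendsto (fun n : ℕ => (log n)⁻¹) atTop (nhds 0) :=
    tendsto_inv_atTop_zero.comp (tendsto_log_atTop.comp tendsto_natCast_atTop_atTop)
  have hprod := hpow.mul hlog
  rw [zero_mul] at hprod
  refine hprod.congr' ?_
  filter_upwards [eventually_ge_atTop 1] with n hn
  rw [rpow_sub (by positivity), rpow_one, div_mul_eq_div_div, div_eq_mul_inv _ (log _)]

/-- Polynomial scaling: with `Q^p, Q^s` independent Poisson of means `C^{γ^p}` and
`C^{γ^s}` (`0 < γ^s < γ^p < 1`), the secondary diversity gain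
`lim -(log P(Q^p+Q^s > C, Q^s>0))/(C log C)` equals `1 - γ^p`, independent of `γ^s`. -/
theorem secondary_diversity_polynomial (γp γs : ℝ)
    (h0 : 0 < γs) (h1 : γs < γp) (h2 : γp < 1) :
    Tendsto (fun C : ℕ =>
        -(Real.log (secOutage ((C : ℝ) ^ γp) ((C : ℝ) ^ γs) C)) / ((C : ℝ) * Real.log C))
      atTop (nhds (1 - γp)) := by
  have hlog : Tendsto (fun n : ℕ => log n) atTop atTop :=
    tendsto_log_atTop.comp tendsto_natCast_atTop_atTop
  refine tendsto_of_tendsto_of_tendsto_of_le_of_le' (g := fun n : ℕ => (1 - γp) - 2 / log n)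
    (h := fun n : ℕ => (1 - γp) + ((n : ℝ) ^ γp / (n * log n) + (n : ℝ) ^ γs / (n * log n)))
    ?_ ?_ ?_ ?_
  · simpa using tendsto_const_nhds.sub (tendsto_const_nhds.div_atTop hlog)
  · simpa using tendsto_const_nhds.add
      ((tendsto_rpow_div_mul_log h2).add (tendsto_rpow_div_mul_log (h1.trans h2)))
  all_goals
    filter_upwards [eventually_ge_atTop 2] with n hn
    have hlogn : 0 < log n := log_pos (by exact_mod_cast hn)
    have hpos : (0 : ℝ) < n * log n := by positivity
  · rw [le_div_iff₀ hpos, sub_mul, div_mul_eq_mul_div, mul_div_assoc,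
      mul_div_cancel_right₀ _ hlogn.ne']
    linarith [le_neg_log_secOutage_rpow h1.le h2.le (n := n) (by omega)]
  · rw [div_le_iff₀ hpos, add_mul, ← add_div, div_mul_cancel₀ _ hpos.ne']
    exact neg_log_secOutage_rpow_le h0.le (by omega)
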